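/- arXiv:2109.05216 — 3 statements merged into one kernel-verified Lean document; each statement's English description precedes it below -/
import Mathlib

section
/- Completeness of aggregate-signature verification in the PPLIST scheme: Let G1, G2, Gι be commutative groups and e : G1 × G2 → Gι a bilinear map, i.e. e satisfies e(x·y, z) = e(x,z)·e(y,z) and e(x, z·w) = e(x,z)·e(x,w) for all x, y ∈ G1 and z, w ∈ G2 (hence e(x^a, z^b) = e(x,z)^{a·b} for all integers a, b). For every natural number d, every g2 ∈ G2, every H ∈ G1, and all families of integers (x_i)_{i=1..d} (station secret keys) and (h_i)_{i=1..d} (aggregation coefficients), if Y_i = g2^{x_i}, YA = ∏_{i=1}^{d} Y_i^{h_i}, Sig_i = H^{h_i·x_i} and σ = ∏_{i=1}^{d} Sig_i, then e(σ, g2^{-1}) · e(H, YA) = 1 (the identity of Gι). -/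
lemma pplist_prod_zpow {G : Type*} [CommGroup G] (H : G) (d : ℕ) (f : ℕ → ℤ) :
    ∏ i ∈ Finset.range d, H ^ f i = H ^ (∑ i ∈ Finset.range d, f i) := by
  induction d with
  | zero => simp
  | succ n ih => simp [Finset.prod_range_succ, Finset.sum_range_succ, ih, zpow_add]

/-- Completeness of aggregate-signature verification in the PPLIST scheme. -/
theorem pplist_verify_complete
    {G1 G2 Gι : Type*} [CommGroup G1] [CommGroup G2] [CommGroup Gι]
    (e : G1 → G2 → Gι)
    (he1 : ∀ x y : G1, ∀ z : G2, e (x * y) z = e x z * e y z)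
    (he2 : ∀ x : G1, ∀ z w : G2, e x (z * w) = e x z * e x w)
    (d : ℕ) (g2 : G2) (H : G1) (x h : ℕ → ℤ)
    (Y : ℕ → G2) (hY : ∀ i, Y i = g2 ^ x i)
    (YA : G2) (hYA : YA = ∏ i ∈ Finset.range d, (Y i) ^ h i)
    (Sig : ℕ → G1) (hSig : ∀ i, Sig i = H ^ (h i * x i))
    (σ : G1) (hσ : σ = ∏ i ∈ Finset.range d, Sig i) :
    e σ g2⁻¹ * e H YA = 1 := by
  set S : ℤ := ∑ i ∈ Finset.range d, h i * x i with hS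
  have hσ' : σ = H ^ S := by
    rw [hσ]; simp only [hSig]; exact pplist_prod_zpow H d _
  have hYA' : YA = g2 ^ S := by
    rw [hYA]
    simp only [hY, ← zpow_mul]
    rw [pplist_prod_zpow g2 d (fun i => x i * h i), hS]
    congr 1
    exact Finset.sum_congr rfl fun i _ => mul_comm _ _
  have key1 : ∀ (a : G1) (n : ℤ) (z : G2), e (a ^ n) z = e a z ^ n := fun a n z =>
    (MonoidHom.mk' (fun b => e b z) (fun b c => he1 b c z)).map_zpow a n
  have key2 : ∀ (n : ℤ), e H (g2 ^ n) = e H g2 ^ n := fun n =>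
    (MonoidHom.mk' (fun w => e H w) (he2 H)).map_zpow g2 n
  have hinv : e (H ^ S) g2⁻¹ = (e (H ^ S) g2)⁻¹ :=
    (MonoidHom.mk' (fun w => e (H ^ S) w) (he2 (H ^ S))).map_inv g2
  rw [hσ', hYA', hinv, key1, key2, inv_mul_cancel]
end

section
/- Special soundness of the ownership-verification Σ-protocol: Let G be a finite commutative group whose cardinality is a prime q. Let g, Yt, C1, C2 ∈ G and let r1, r2, c, r1', r2', c' be integers such that q does not divide c − c'. If g^{r1} · C1^{c} = g^{r1'} · C1^{c'} and Yt^{r1} · g^{r2} · C2^{c} = Yt^{r1'} · g^{r2'} · C2^{c'} (two accepting transcripts with the same commitments V1, V2 but distinct challenges), then there exist integers k and x such that C1 = g^{k} and C2 = Yt^{k} · g^{x}. -/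
/-!
Dividing the two verification equations gives `C1 ^ (c - c') = g ^ (r1' - r1)` and
`C2 ^ (c - c') = Yt ^ (r1' - r1) * g ^ (r2' - r2)`. Since `c - c'` is invertible modulo the group
order `q`, raising both relations to the power `u` with `u * (c - c') ≡ 1 [ZMOD q]` extracts the
witnesses `k = (r1' - r1) * u` and `x = (r2' - r2) * u`.
-/

theorem zpow_sub_eq_div_of_mul_zpow_eq {G : Type*} [CommGroup G] {a b y : G} {c c' : ℤ}
    (h : a * y ^ c = b * y ^ c') : y ^ (c - c') = b / a := by
  rw [zpow_sub, ← div_eq_mul_inv, div_eq_div_iff_mul_eq_mul, mul_comm, h]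

theorem zpow_zpow_eq_self_of_bezout {G : Type*} [Group G] {a : G} {e n u v : ℤ}
    (huv : u * e + v * n = 1) (ha : a ^ n = 1) : (a ^ e) ^ u = a := by
  calc (a ^ e) ^ u = (a ^ e) ^ u * (a ^ n) ^ v := by rw [ha, one_zpow, mul_one]
    _ = a ^ (u * e + v * n) := by rw [zpow_add, mul_comm u, mul_comm v, zpow_mul, zpow_mul]
    _ = a := by rw [huv, zpow_one]

/-- Special soundness of the ownership-verification Σ-protocol. -/
theorem pplist_ownership_special_soundness
    {G : Type*} [CommGroup G] [Fintype G] (q : ℕ) (hq : q.Prime)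
    (hcard : Fintype.card G = q)
    (g Yt C1 C2 : G) (r1 r2 c r1' r2' c' : ℤ)
    (hc : ¬ ((q : ℤ) ∣ (c - c')))
    (h1 : g ^ r1 * C1 ^ c = g ^ r1' * C1 ^ c')
    (h2 : Yt ^ r1 * g ^ r2 * C2 ^ c = Yt ^ r1' * g ^ r2' * C2 ^ c') :
    ∃ k x : ℤ, C1 = g ^ k ∧ C2 = Yt ^ k * g ^ x := by
  have hexp (a : G) : a ^ (q : ℤ) = 1 := by rw [zpow_natCast, ← hcard, pow_card_eq_one]
  obtain ⟨u, v, huv⟩ := ((Nat.prime_iff_prime_int.mp hq).coprime_iff_not_dvd.mpr hc).symm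
  have hC1 : C1 ^ (c - c') = g ^ (r1' - r1) := by
    rw [zpow_sub_eq_div_of_mul_zpow_eq h1, zpow_sub, div_eq_mul_inv]
  have hC2 : C2 ^ (c - c') = Yt ^ (r1' - r1) * g ^ (r2' - r2) := by
    rw [zpow_sub_eq_div_of_mul_zpow_eq h2, ← div_mul_div_comm, zpow_sub, zpow_sub, div_eq_mul_inv,
      div_eq_mul_inv]
  refine ⟨(r1' - r1) * u, (r2' - r2) * u, ?_, ?_⟩
  · rw [← zpow_zpow_eq_self_of_bezout huv (hexp C1), hC1, zpow_mul]
  · rw [← zpow_zpow_eq_self_of_bezout huv (hexp C2), hC2, mul_zpow, zpow_mul, zpow_mul]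
end

section
/- Soundness of aggregate-signature verification: Let G1, G2, Gι be commutative groups with G1 finite of prime order q, and let e : G1 × G2 → Gι be a bilinear map, i.e. e(x·y, z) = e(x,z)·e(y,z) and e(x, z·w) = e(x,z)·e(x,w) for all x, y ∈ G1 and z, w ∈ G2. Let g1 be a generator of G1 (orderOf g1 = q) and g2 ∈ G2 with e(g1, g2) ≠ 1. Let H ∈ G1, let (x_i)_{i=1..d} and (h_i)_{i=1..d} be integers, and set YA = ∏_{i=1}^{d} (g2^{x_i})^{h_i}. If σ ∈ G1 satisfies the verification equation e(σ, g2^{-1}) · e(H, YA) = 1, then σ = H^{∑_{i=1}^{d} h_i·x_i}; i.e. the honestly aggregated signature is the unique element of G1 passing verification. -/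
/-- Soundness of aggregate-signature verification in the PPLIST scheme. -/
theorem pplist_verify_sound
    {G1 G2 Gι : Type*} [CommGroup G1] [CommGroup G2] [CommGroup Gι]
    [Fintype G1] (q : ℕ) (hq : q.Prime) (hcard : Fintype.card G1 = q)
    (e : G1 → G2 → Gι)
    (he1 : ∀ x y : G1, ∀ z : G2, e (x * y) z = e x z * e y z)
    (he2 : ∀ x : G1, ∀ z w : G2, e x (z * w) = e x z * e x w)
    (g1 : G1) (hg1 : orderOf g1 = q)
    (g2 : G2) (hnd : e g1 g2 ≠ 1)
    (H : G1) (d : ℕ) (x h : ℕ → ℤ)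
    (YA : G2) (hYA : YA = ∏ i ∈ Finset.range d, (g2 ^ x i) ^ h i)
    (σ : G1) (hver : e σ g2⁻¹ * e H YA = 1) :
    σ = H ^ (∑ i ∈ Finset.range d, h i * x i) := by
  set S : ℤ := ∑ i ∈ Finset.range d, h i * x i with hS
  -- homomorphism in the first argument
  let φ : G1 →* Gι := MonoidHom.mk' (fun a => e a g2) (fun a b => he1 a b g2)
  have hφ : ∀ a : G1, φ a = e a g2 := fun a => rfl
  -- homomorphism in the second argument, for any fixed first argument
  have hsnd : ∀ a : G1, ∀ n : ℤ, e a (g2 ^ n) = e a g2 ^ n := by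
    intro a n
    let ψ : G2 →* Gι := MonoidHom.mk' (fun z => e a z) (fun z w => he2 a z w)
    exact map_zpow ψ g2 n
  have hprod : ∀ n : ℕ, ∏ i ∈ Finset.range n, (g2 ^ x i) ^ h i
      = g2 ^ (∑ i ∈ Finset.range n, h i * x i) := by
    intro n
    induction n with
    | zero => simp
    | succ n ih =>
      rw [Finset.prod_range_succ, Finset.sum_range_succ, ih, ← zpow_mul,
        mul_comm (x n), ← zpow_add]
  have hYA' : YA = g2 ^ S := by rw [hYA, hS, hprod]
  have hinv : ∀ a : G1, e a g2⁻¹ = (e a g2)⁻¹ := by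
    intro a
    have := hsnd a (-1)
    simpa using this
  have hHpow : e (H ^ S) g2 = e H g2 ^ S := by
    simpa [hφ] using map_zpow φ H S
  have hkey : φ (σ⁻¹ * H ^ S) = 1 := by
    have : (e σ g2)⁻¹ * e H g2 ^ S = 1 := by
      rw [← hinv, ← hsnd, ← hYA']; exact hver
    calc φ (σ⁻¹ * H ^ S) = (e σ g2)⁻¹ * e (H ^ S) g2 := by
          rw [← hφ, map_mul, map_inv, hφ, hφ]
      _ = 1 := by rw [hHpow]; exact this
  -- order of e g1 g2 is q
  have hg1q : g1 ^ q = 1 := by rw [← hg1]; exact pow_orderOf_eq_one g1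
  have hordφ : orderOf (φ g1) = q := by
    have hdvd : orderOf (φ g1) ∣ q := by
      apply orderOf_dvd_of_pow_eq_one
      rw [← map_pow, hg1q, map_one]
    rcases (Nat.Prime.eq_one_or_self_of_dvd hq _ hdvd) with h1 | h1
    · exact absurd (orderOf_eq_one_iff.mp h1) (by simpa [hφ] using hnd)
    · exact h1
  -- g1 generates G1
  have htop : Subgroup.zpowers g1 = ⊤ := by
    apply Subgroup.eq_top_of_card_eq
    rw [Nat.card_zpowers, hg1, Nat.card_eq_fintype_card, hcard]
  obtain ⟨k, hk0⟩ := htop ▸ Subgroup.mem_top (σ⁻¹ * H ^ S)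
  have hk : g1 ^ k = σ⁻¹ * H ^ S := hk0
  have : φ g1 ^ k = 1 := by rw [← map_zpow, hk, hkey]
  have hqk : (q : ℤ) ∣ k := by
    rw [← hordφ]
    exact orderOf_dvd_iff_zpow_eq_one.mpr this
  obtain ⟨m, hm⟩ := hqk
  have h1 : σ⁻¹ * H ^ S = 1 := by
    rw [← hk, hm, zpow_mul]
    norm_cast
    rw [hg1q, one_zpow]
  have h2 := mul_eq_one_iff_inv_eq.mp h1
  rw [← h2, inv_inv]
end
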